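/- arXiv:2511.15834 — 2 statements merged into one kernel-verified Lean document; each statement's English description precedes it below -/
import Mathlib

section
/- For a prime p ≥ 5, the number of undirected Hamiltonian cycles on Z/p that are not star polygons is divisible by p. -/
open Equiv
set_option linter.unusedSectionVars false

variable (p : ℕ) [NeZero p]

/-- `σ` is a (directed) Hamiltonian cycle on the `p` vertices `ZMod p`:
a single cycle whose support is everything. -/
def IsHC (σ : Perm (ZMod p)) : Prop := σ.IsCycle ∧ σ.support = Finset.univ

/-- The type of directed Hamiltonian cycles on `ZMod p`. -/
def HC := {σ : Perm (ZMod p) // IsHC p σ}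

/-- Rotation `k ↦ r + k`. -/
def rot (r : ZMod p) : Perm (ZMod p) := Equiv.addLeft r

/-- Reflection `k ↦ s - k`. -/
def reflAt (s : ZMod p) : Perm (ZMod p) := Equiv.subLeft s

/-- `g` fixes the *undirected* cycle underlying `σ` (conjugation can reverse orientation). -/
def FixedBy (g σ : Perm (ZMod p)) : Prop := g * σ * g⁻¹ = σ ∨ g * σ * g⁻¹ = σ⁻¹

lemma rot_zero : rot p 0 = 1 := by ext x; simp [rot]

lemma rot_neg (r : ZMod p) : rot p (-r) = (rot p r)⁻¹ := by
  ext x; simp [rot, neg_add_eq_sub, eq_sub_iff_add_eq]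

lemma rot_add (r s : ZMod p) : rot p (r + s) = rot p r * rot p s := by
  ext x; simp [rot, add_assoc]

/-- The action of a rotation on a cycle, by conjugation. -/
def rotAct (r : ZMod p) (σ : Perm (ZMod p)) : Perm (ZMod p) := rot p r * σ * (rot p r)⁻¹

lemma rotAct_zero (σ : Perm (ZMod p)) : rotAct p 0 σ = σ := by
  simp [rotAct, rot_zero]

lemma rotAct_inv (r : ZMod p) (σ : Perm (ZMod p)) :
    (rotAct p r σ)⁻¹ = rotAct p r σ⁻¹ := by
  simp [rotAct, mul_inv_rev, mul_assoc]

lemma rotAct_rotAct (r s : ZMod p) (σ : Perm (ZMod p)) :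
    rotAct p r (rotAct p s σ) = rotAct p (r + s) σ := by
  simp [rotAct, rot_add, mul_inv_rev, mul_assoc]

lemma rotAct_neg_cancel (r : ZMod p) (σ : Perm (ZMod p)) :
    rotAct p (-r) (rotAct p r σ) = σ := by
  rw [rotAct_rotAct, neg_add_cancel, rotAct_zero]

/-- Setoid identifying a directed cycle with its reversal: undirected cycles. -/
def revSetoid : Setoid (HC p) where
  r σ τ := τ.1 = σ.1 ∨ τ.1 = σ.1⁻¹
  iseqv := by
    constructor
    · exact fun a => Or.inl rfl
    · rintro a b (h | h)
      · exact Or.inl h.symm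
      · right; rw [h, inv_inv]
    · rintro a b c (h1 | h1) (h2 | h2) <;> rw [h2, h1] <;> simp
/-- Undirected Hamiltonian cycles. -/
def UCyc := Quotient (revSetoid p)

/-- Setoid identifying cycles up to rotation and reversal: the equivalence classes
of undirected cycles under rotation. -/
def rotSetoid : Setoid (HC p) where
  r σ τ := ∃ r : ZMod p, τ.1 = rotAct p r σ.1 ∨ τ.1 = (rotAct p r σ.1)⁻¹
  iseqv := by
    constructor
    · exact fun a => ⟨0, Or.inl (by rw [rotAct_zero])⟩
    · rintro a b ⟨r, h | h⟩ <;> refine ⟨-r, ?_⟩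
      · left; rw [h, rotAct_neg_cancel]
      · right; rw [h, rotAct_inv, inv_inv, rotAct_neg_cancel]
    · rintro a b c ⟨r, h1 | h1⟩ ⟨s, h2 | h2⟩ <;> refine ⟨s + r, ?_⟩ <;>
        rw [h2, h1] <;>
        simp [rotAct_inv, rotAct_rotAct]
/-- Rotation classes of undirected Hamiltonian cycles. -/
def RotClasses := Quotient (rotSetoid p)

lemma rot_pow (r : ZMod p) (n : ℕ) : rot p r ^ n = rot p (n • r) := by
  induction n with
  | zero => simp [rot_zero]
  | succ n ih => rw [pow_succ, ih, ← rot_add, succ_nsmul]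

/-- Centralizer of a full-support cycle: anything commuting with it is a power of it. -/
lemma cent (σ g : Perm (ZMod p)) (h1 : σ.IsCycle) (h2 : σ.support = Finset.univ)
    (hcom : g * σ = σ * g) : ∃ i : ℤ, g = σ ^ i := by
  have hmem : ∀ x : ZMod p, σ x ≠ x := fun x => by
    have : x ∈ σ.support := h2 ▸ Finset.mem_univ x
    exact Perm.mem_support.mp this
  obtain ⟨i, hi⟩ := h1.sameCycle (hmem 0) (hmem (g 0))
  refine ⟨i, ?_⟩
  ext x
  obtain ⟨j, hj⟩ := h1.sameCycle (hmem 0) (hmem x)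
  calc g x = g ((σ ^ j) 0) := by rw [hj]
    _ = (σ ^ j) (g 0) := by
        have h := (Commute.zpow_right (show Commute g σ from hcom) j)
        have := congrArg (fun f : Perm (ZMod p) => f 0) h
        simpa using this
    _ = (σ ^ j) ((σ ^ i) 0) := by rw [hi]
    _ = (σ ^ i) ((σ ^ j) 0) := by
        rw [← Perm.mul_apply, ← Perm.mul_apply, ← zpow_add, add_comm, zpow_add]
    _ = (σ ^ i) x := by rw [hj]

lemma star_of_commute [Fact p.Prime] (σ : Perm (ZMod p)) (h1 : σ.IsCycle)
    (h2 : σ.support = Finset.univ) (r : ZMod p) (hr : r ≠ 0)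
    (hcom : rot p r * σ = σ * rot p r) : ∃ d : ZMod p, σ = Equiv.addLeft d := by
  obtain ⟨i, hi⟩ := cent p σ (rot p r) h1 h2 hcom
  have horder : orderOf σ = p := by
    rw [h1.orderOf, h2, Finset.card_univ, ZMod.card]
  have hu : (i : ZMod p) ≠ 0 := by
    intro h0
    have hdvd : (p : ℤ) ∣ i := by exact_mod_cast (ZMod.intCast_zmod_eq_zero_iff_dvd i p).mp h0
    have : σ ^ i = 1 := by
      rw [← horder] at hdvd
      exact orderOf_dvd_iff_zpow_eq_one.mp hdvd |>.symm ▸ rfl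
    rw [← hi] at this
    have := congrArg (fun f : Perm (ZMod p) => f 0) this
    simp [rot] at this
    exact hr this
  set u : ZMod p := (i : ZMod p) with hudef
  set m : ℕ := (u⁻¹).val with hmdef
  have hkey : σ ^ (i * (m : ℤ)) = σ := by
    have h1' : ((i * (m : ℤ) : ℤ) : ZMod p) = 1 := by
      push_cast
      rw [ZMod.natCast_val, ZMod.cast_id]
      exact mul_inv_cancel₀ hu
    have : ((i * (m : ℤ) - 1 : ℤ) : ZMod p) = 0 := by rw [Int.cast_sub, h1']; simp
    have hdvd : (p : ℤ) ∣ (i * (m : ℤ) - 1) := (ZMod.intCast_zmod_eq_zero_iff_dvd _ p).mp this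
    have hone : σ ^ (i * (m : ℤ) - 1) = 1 := by
      apply orderOf_dvd_iff_zpow_eq_one.mp
      rwa [horder]
    calc σ ^ (i * (m : ℤ)) = σ ^ (i * (m : ℤ) - 1) * σ ^ (1 : ℤ) := by rw [← zpow_add]; ring_nf
      _ = σ := by rw [hone, one_mul, zpow_one]
  refine ⟨m • r, ?_⟩
  have : σ = (rot p r) ^ m := by
    rw [← hkey, zpow_mul, ← hi, zpow_natCast]
  rw [this, rot_pow]
  rfl

/-- Freeness: a nontrivial rotation fixing an undirected Hamiltonian cycle forces it
to be a star polygon. -/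
lemma star_of_fixed [Fact p.Prime] (σ : Perm (ZMod p)) (h1 : σ.IsCycle)
    (h2 : σ.support = Finset.univ) (r : ZMod p) (hr : r ≠ 0) (h2r : r + r ≠ 0)
    (hfix : rotAct p r σ = σ ∨ rotAct p r σ = σ⁻¹) :
    ∃ d : ZMod p, σ = Equiv.addLeft d := by
  rcases hfix with h | h
  · apply star_of_commute p σ h1 h2 r hr
    have := congrArg (fun τ => τ * rot p r) h
    simpa [rotAct, mul_assoc] using this
  · apply star_of_commute p σ h1 h2 (r + r) h2r
    have hgg : rotAct p (r + r) σ = σ := by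
      rw [← rotAct_rotAct, h, ← rotAct_inv, h, inv_inv]
    have := congrArg (fun τ => τ * rot p (r + r)) hgg
    simpa [rotAct, mul_assoc] using this

lemma isHC_rotAct (r : ZMod p) (σ : Perm (ZMod p)) (h : IsHC p σ) :
    IsHC p (rotAct p r σ) := by
  refine ⟨h.1.conj, ?_⟩
  rw [rotAct, Perm.support_conj, h.2, Finset.map_univ_equiv]

/-- Rotation as a map on directed Hamiltonian cycles. -/
def rotHC (r : ZMod p) (σ : HC p) : HC p := ⟨rotAct p r σ.1, isHC_rotAct p r σ.1 σ.2⟩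

/-- Rotation as a map on undirected Hamiltonian cycles. -/
def rotU (r : ZMod p) : UCyc p → UCyc p :=
  Quotient.map (rotHC p r) (by
    rintro a b (h | h)
    · exact Or.inl (by simp [rotHC, h])
    · exact Or.inr (by simp [rotHC, h, rotAct_inv]))

lemma rotU_mk (r : ZMod p) (σ : HC p) :
    rotU p r (Quotient.mk (revSetoid p) σ) = Quotient.mk (revSetoid p) (rotHC p r σ) := rfl

lemma rotAct_addLeft (r d : ZMod p) : rotAct p r (Equiv.addLeft d) = Equiv.addLeft d := by
  ext x
  simp [rotAct, rot]
  ring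

instance rotMulAction : MulAction (Multiplicative (ZMod p)) (UCyc p) where
  smul r u := rotU p (Multiplicative.toAdd r) u
  one_smul u := by
    refine Quotient.inductionOn u (fun σ => ?_)
    show rotU p (0 : ZMod p) _ = _
    rw [rotU_mk]
    congr 1
    exact Subtype.ext (rotAct_zero p σ.1)
  mul_smul r s u := by
    refine Quotient.inductionOn u (fun σ => ?_)
    show rotU p (Multiplicative.toAdd r + Multiplicative.toAdd s) _ =
      rotU p (Multiplicative.toAdd r) (rotU p (Multiplicative.toAdd s) _)
    rw [rotU_mk, rotU_mk, rotU_mk]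
    congr 1
    exact Subtype.ext (rotAct_rotAct p _ _ σ.1).symm

/-- the number of undirected Hamiltonian cycles on `ZMod p` which are not
star polygons is divisible by `p` (the rotation group acts freely on them). -/
theorem stmt11 (p : ℕ) [Fact p.Prime] (hp : 5 ≤ p) :
    p ∣ Nat.card {u : UCyc p // ∀ σ : HC p, Quotient.mk (revSetoid p) σ = u →
        ∀ d : ZMod p, σ.1 ≠ Equiv.addLeft d} := by
  haveI : NeZero p := ⟨(Fact.out : p.Prime).ne_zero⟩
  set NonStar : UCyc p → Prop := fun u => ∀ σ : HC p, Quotient.mk (revSetoid p) σ = u →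
      ∀ d : ZMod p, σ.1 ≠ Equiv.addLeft d with hNS
  -- the subtype is invariant under the action
  have hinv : ∀ (r : ZMod p) (u : UCyc p), NonStar u → NonStar (rotU p r u) := by
    intro r u hu
    refine Quotient.inductionOn u (fun τ hτ σ hσ d hd => ?_) hu
    rw [rotU_mk] at hσ
    have hrel := Quotient.exact hσ
    rcases hrel with h | h
    · -- τ.1 = rotAct p r σ.1  (careful with direction)
      have : τ.1 = rotAct p (-r) σ.1 := by
        rw [← h]; exact (rotAct_neg_cancel p r τ.1).symm
      rw [hd, rotAct_addLeft] at this
      exact hτ τ rfl d this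
    · have h3 : (Equiv.addLeft d : Perm (ZMod p))⁻¹ = Equiv.addLeft (-d) := by
        ext x
        simp [Equiv.Perm.inv_def, Equiv.symm_apply_eq]
      have : τ.1 = rotAct p (-r) (σ.1⁻¹) := by
        rw [← h]; exact (rotAct_neg_cancel p r τ.1).symm
      rw [hd, h3, rotAct_addLeft] at this
      exact hτ τ rfl (-d) this
  -- group action on the subtype
  letI : MulAction (Multiplicative (ZMod p)) {u : UCyc p // NonStar u} :=
    { smul := fun r u => ⟨rotU p (Multiplicative.toAdd r) u.1, hinv _ u.1 u.2⟩
      one_smul := fun u => Subtype.ext (one_smul (Multiplicative (ZMod p)) u.1)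
      mul_smul := fun r s u => Subtype.ext (mul_smul r s u.1) }
  -- no fixed points
  have hfree : IsEmpty (MulAction.fixedPoints (Multiplicative (ZMod p))
      {u : UCyc p // NonStar u}) := by
    constructor
    rintro ⟨⟨u, hu⟩, hfix⟩
    have h1 : (1 : ZMod p) ≠ 0 := one_ne_zero
    have h2 : (1 : ZMod p) + 1 ≠ 0 := by
      have h4 : ((2 : ℕ) : ZMod p) ≠ 0 := by
        rw [Ne, ZMod.natCast_eq_zero_iff]
        intro h
        exact absurd (Nat.le_of_dvd (by norm_num) h) (by omega)
      rw [show ((1 : ZMod p) + 1) = ((2 : ℕ) : ZMod p) by push_cast; ring]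
      exact h4
    obtain ⟨σ, hσu⟩ := Quotient.exists_rep u
    subst hσu
    have hact := hfix (Multiplicative.ofAdd (1 : ZMod p))
    have heq : rotU p (1 : ZMod p) ⟦σ⟧ = ⟦σ⟧ := congrArg Subtype.val hact
    rw [rotU_mk] at heq
    have hrel := Quotient.exact heq
    have hfix' : rotAct p 1 σ.1 = σ.1 ∨ rotAct p 1 σ.1 = σ.1⁻¹ := by
      rcases hrel with h | h
      · exact Or.inl h.symm
      · have h5 := congrArg (fun τ : Perm (ZMod p) => τ⁻¹) h
        simp only [inv_inv] at h5
        exact Or.inr h5.symm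
    obtain ⟨d, hd⟩ := star_of_fixed p σ.1 σ.2.1 σ.2.2 1 h1 h2 hfix'
    exact hu σ rfl d hd
  -- finiteness
  haveI : Finite (HC p) := Subtype.finite
  haveI : Finite (UCyc p) := Quotient.finite _
  haveI : Finite {u : UCyc p // NonStar u} := Subtype.finite
  -- p-group congruence
  have hpg : IsPGroup p (Multiplicative (ZMod p)) := by
    apply IsPGroup.of_card
    rw [show Nat.card (Multiplicative (ZMod p)) = p by simp [Nat.card_eq_fintype_card, ZMod.card]]
    exact (pow_one p).symm
  have hmod := hpg.card_modEq_card_fixedPoints {u : UCyc p // NonStar u}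
  haveI := hfree
  rw [Nat.card_of_isEmpty (α := MulAction.fixedPoints (Multiplicative (ZMod p))
      {u : UCyc p // NonStar u})] at hmod
  exact (Nat.modEq_zero_iff_dvd).mp hmod
end

section
/- For a prime p ≥ 5, the stabilizer in the dihedral group D_p (of order 2p) of any undirected Hamiltonian cycle on Z/p has order 1, 2, or 2p; in particular no cycle has stabilizer of order exactly p, since a cycle invariant under all rotations is also invariant under some reflection. -/
open Equiv
set_option linter.unusedSectionVars false

variable (p : ℕ) [NeZero p]

/-- The elements of the dihedral group `D_p` acting on `ZMod p`: rotations `k ↦ r + k`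
and reflections `k ↦ s - k`. -/
def Dgrp (p : ℕ) [NeZero p] : Set (Equiv.Perm (ZMod p)) :=
  {g | (∃ r : ZMod p, g = rot p r) ∨ ∃ s : ZMod p, g = reflAt p s}

/- ## Auxiliary lemmas -/

section Aux

lemma reflAt_mul_reflAt (s t : ZMod p) : reflAt p s * reflAt p t = rot p (s - t) := by
  ext x; simp [reflAt, rot, Equiv.Perm.mul_apply]; ring

lemma reflAt_mul_rot (s r : ZMod p) : reflAt p s * rot p r = reflAt p (s - r) := by
  ext x; simp [reflAt, rot, Equiv.Perm.mul_apply]; ring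

lemma rot_mul_reflAt (r s : ZMod p) : rot p r * reflAt p s = reflAt p (r + s) := by
  ext x; simp [reflAt, rot, Equiv.Perm.mul_apply]; ring

lemma reflAt_inv (s : ZMod p) : (reflAt p s)⁻¹ = reflAt p s := by
  rw [inv_eq_iff_mul_eq_one, reflAt_mul_reflAt, sub_self, rot_zero]

lemma conj_mul_eq {α : Type*} [Group α] (g h σ : α) :
    (g * h) * σ * (g * h)⁻¹ = g * (h * σ * h⁻¹) * g⁻¹ := by group

lemma conj_inv_eq {α : Type*} [Group α] (g σ : α) :
    g * σ⁻¹ * g⁻¹ = (g * σ * g⁻¹)⁻¹ := by group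

lemma fixedBy_one (σ : Perm (ZMod p)) : FixedBy p 1 σ := Or.inl (by simp)

lemma fixedBy_mul {g h σ : Perm (ZMod p)} (hg : FixedBy p g σ) (hh : FixedBy p h σ) :
    FixedBy p (g * h) σ := by
  unfold FixedBy at *
  rw [conj_mul_eq]
  rcases hh with hh | hh <;> rw [hh]
  · exact hg
  · rw [conj_inv_eq]
    rcases hg with hg | hg <;> rw [hg]
    · right; rfl
    · left; rw [inv_inv]

lemma fixedBy_pow {g σ : Perm (ZMod p)} (h : FixedBy p g σ) (n : ℕ) :
    FixedBy p (g ^ n) σ := by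
  induction n with
  | zero => simpa using fixedBy_one p σ
  | succ n ih => rw [pow_succ]; exact fixedBy_mul p ih h

lemma conjPowFix {g σ : Perm (ZMod p)} (h : g * σ * g⁻¹ = σ) (n : ℕ) :
    g ^ n * σ * (g ^ n)⁻¹ = σ := by
  induction n with
  | zero => simp
  | succ n ih => rw [pow_succ, conj_mul_eq, h, ih]

lemma rot_nsmul (r : ZMod p) (n : ℕ) : rot p (n • r) = (rot p r) ^ n := by
  induction n with
  | zero => simpa using rot_zero p
  | succ n ih => rw [succ_nsmul, rot_add, ih, pow_succ]

lemma eq_nsmul_of_ne_zero [Fact p.Prime] {a : ZMod p} (ha : a ≠ 0) (s : ZMod p) :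
    s = (s * a⁻¹).val • a := by
  rw [nsmul_eq_mul, ZMod.natCast_val, ZMod.cast_id, mul_assoc,
    inv_mul_cancel₀ ha, mul_one]

lemma conj_rot_all [Fact p.Prime] {σ : Perm (ZMod p)} {a : ZMod p} (ha : a ≠ 0)
    (h : rot p a * σ * (rot p a)⁻¹ = σ) (s : ZMod p) :
    rot p s * σ * (rot p s)⁻¹ = σ := by
  rw [eq_nsmul_of_ne_zero p ha s, rot_nsmul]
  exact conjPowFix p h _

lemma fixedBy_rot_all [Fact p.Prime] {σ : Perm (ZMod p)} {a : ZMod p} (ha : a ≠ 0)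
    (h : FixedBy p (rot p a) σ) (s : ZMod p) : FixedBy p (rot p s) σ := by
  rw [eq_nsmul_of_ne_zero p ha s, rot_nsmul]
  exact fixedBy_pow p h _

lemma twoNeZero [Fact p.Prime] (hp : 5 ≤ p) : (2 : ZMod p) ≠ 0 := by
  intro h
  have h2 : ((2 : ℕ) : ZMod p) = 0 := by exact_mod_cast h
  have hdvd : p ∣ 2 := (ZMod.natCast_eq_zero_iff 2 p).mp h2
  have := Nat.le_of_dvd (by norm_num) hdvd
  omega

lemma rot_injective : Function.Injective (rot p) := by
  intro r s h
  have := congrArg (fun g : Perm (ZMod p) => g 0) h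
  simpa [rot] using this

lemma reflAt_injective : Function.Injective (reflAt p) := by
  intro r s h
  have := congrArg (fun g : Perm (ZMod p) => g 0) h
  simpa [reflAt] using this

lemma rot_ne_reflAt [Fact p.Prime] (hp : 5 ≤ p) (r s : ZMod p) :
    rot p r ≠ reflAt p s := by
  intro h
  have h0 := congrArg (fun g : Perm (ZMod p) => g 0) h
  have h1 := congrArg (fun g : Perm (ZMod p) => g 1) h
  simp only [rot, reflAt, Equiv.coe_addLeft, Equiv.subLeft_apply] at h0 h1
  rw [add_zero, sub_zero] at h0
  apply twoNeZero p hp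
  subst h0
  linear_combination h1

lemma Dgrp_ncard [Fact p.Prime] (hp : 5 ≤ p) : (Dgrp p).ncard = 2 * p := by
  have hD : Dgrp p = Set.range (rot p) ∪ Set.range (reflAt p) := by
    ext g
    simp only [Dgrp, Set.mem_setOf_eq, Set.mem_union, Set.mem_range]
    constructor
    · rintro (⟨r, hr⟩ | ⟨s, hs⟩)
      · exact Or.inl ⟨r, hr.symm⟩
      · exact Or.inr ⟨s, hs.symm⟩
    · rintro (⟨r, hr⟩ | ⟨s, hs⟩)
      · exact Or.inl ⟨r, hr.symm⟩
      · exact Or.inr ⟨s, hs.symm⟩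
  have hdisj : Disjoint (Set.range (rot p)) (Set.range (reflAt p)) := by
    rw [Set.disjoint_left]
    rintro g ⟨r, hr⟩ ⟨s, hs⟩
    exact rot_ne_reflAt p hp r s (hr.trans hs.symm)
  have hcard : Nat.card (ZMod p) = p := Nat.card_zmod p
  rw [hD, Set.ncard_union_eq hdisj (Set.toFinite _) (Set.toFinite _),
    ← Set.image_univ, ← Set.image_univ,
    Set.ncard_image_of_injective _ (rot_injective p),
    Set.ncard_image_of_injective _ (reflAt_injective p), Set.ncard_univ, hcard]
  omega

lemma sigma_ne_inv [Fact p.Prime] (hp : 5 ≤ p) (σ : HC p) : σ.1 ≠ σ.1⁻¹ := by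
  intro h
  have hord : orderOf σ.1 = p := by
    rw [Equiv.Perm.IsCycle.orderOf σ.2.1, σ.2.2, Finset.card_univ, ZMod.card]
  have hsq : σ.1 ^ 2 = 1 := by
    rw [pow_two]; nth_rewrite 2 [h]; rw [mul_inv_cancel]
  have : orderOf σ.1 ∣ 2 := orderOf_dvd_of_pow_eq_one hsq
  rw [hord] at this
  have := Nat.le_of_dvd (by norm_num) this
  omega

end Aux

/-- the stabilizer in `D_p` of any undirected Hamiltonian cycle has order
`1`, `2` or `2p`; moreover a cycle invariant under all rotations is also invariant
under some reflection. -/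
theorem stmt12 (p : ℕ) [Fact p.Prime] (hp : 5 ≤ p) (σ : HC p) :
    ({g ∈ Dgrp p | FixedBy p g σ.1}.ncard = 1 ∨
     {g ∈ Dgrp p | FixedBy p g σ.1}.ncard = 2 ∨
     {g ∈ Dgrp p | FixedBy p g σ.1}.ncard = 2 * p) ∧
    ((∀ r : ZMod p, FixedBy p (rot p r) σ.1) →
      ∃ s : ZMod p, FixedBy p (reflAt p s) σ.1) := by
  have hNe : σ.1 ≠ σ.1⁻¹ := sigma_ne_inv p hp σ
  by_cases hall : ∀ r : ZMod p, FixedBy p (rot p r) σ.1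
  · -- the cycle is invariant under all rotations: it is a "star polygon"
    -- first, strict invariance under some nonzero rotation
    have hstrict : ∃ a : ZMod p, a ≠ 0 ∧ rot p a * σ.1 * (rot p a)⁻¹ = σ.1 := by
      rcases hall 1 with h | h
      · exact ⟨1, one_ne_zero, h⟩
      · refine ⟨2, twoNeZero p hp, ?_⟩
        have h2 : (2 : ZMod p) = 1 + 1 := by norm_num
        rw [h2, rot_add, conj_mul_eq, h, conj_inv_eq, h, inv_inv]
    obtain ⟨a, ha, hconja⟩ := hstrict
    have hconj : ∀ s : ZMod p, rot p s * σ.1 * (rot p s)⁻¹ = σ.1 :=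
      conj_rot_all p ha hconja
    -- hence σ is a translation
    have hsigma : σ.1 = rot p (σ.1 0) := by
      ext x
      have h := hconj x
      have h' : rot p x * σ.1 = σ.1 * rot p x := by
        rw [← mul_inv_eq_iff_eq_mul]; exact h
      have := congrArg (fun g : Perm (ZMod p) => g 0) h'
      simp only [Equiv.Perm.mul_apply, rot, Equiv.coe_addLeft, add_zero] at this
      simp only [rot, Equiv.coe_addLeft]
      rw [← this, add_comm]
    set d := σ.1 0 with hd
    -- every reflection reverses σ
    have hrefl : ∀ s : ZMod p, reflAt p s * σ.1 * (reflAt p s)⁻¹ = σ.1⁻¹ := by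
      intro s
      rw [reflAt_inv, hsigma, reflAt_mul_rot, reflAt_mul_reflAt, ← rot_neg]
      ring_nf
    -- the stabilizer is all of D_p
    have hS : {g ∈ Dgrp p | FixedBy p g σ.1} = Dgrp p := by
      ext g
      simp only [Set.mem_setOf_eq, Set.mem_sep_iff, and_iff_left_iff_imp]
      rintro (⟨r, rfl⟩ | ⟨s, rfl⟩)
      · exact Or.inl (hconj r)
      · exact Or.inr (hrefl s)
    refine ⟨Or.inr (Or.inr ?_), fun _ => ⟨0, Or.inr (hrefl 0)⟩⟩
    rw [hS]; exact Dgrp_ncard p hp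
  · -- not all rotations fix σ: the only rotation in the stabilizer is the identity
    refine ⟨?_, fun h => absurd h hall⟩
    have honly : ∀ r : ZMod p, FixedBy p (rot p r) σ.1 → r = 0 := by
      intro r hr
      by_contra hrne
      exact hall (fixedBy_rot_all p hrne hr)
    have h1mem : (1 : Perm (ZMod p)) ∈ {g ∈ Dgrp p | FixedBy p g σ.1} := by
      refine ⟨Or.inl ⟨0, (rot_zero p).symm⟩, fixedBy_one p σ.1⟩
    by_cases hrefl : ∃ s : ZMod p, FixedBy p (reflAt p s) σ.1
    · obtain ⟨s, hs⟩ := hrefl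
      have hSeq : {g ∈ Dgrp p | FixedBy p g σ.1} = {1, reflAt p s} := by
        ext g
        simp only [Set.mem_sep_iff, Set.mem_insert_iff, Set.mem_singleton_iff]
        constructor
        · rintro ⟨(⟨r, rfl⟩ | ⟨t, rfl⟩), hfix⟩
          · left; rw [honly r hfix, rot_zero]
          · right
            have : FixedBy p (reflAt p t * reflAt p s) σ.1 :=
              fixedBy_mul p hfix hs
            rw [reflAt_mul_reflAt] at this
            have := honly _ this
            rw [sub_eq_zero] at this
            rw [this]
        · rintro (rfl | rfl)
          · exact ⟨h1mem.1, h1mem.2⟩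
          · exact ⟨Or.inr ⟨s, rfl⟩, hs⟩
      right; left
      rw [hSeq, Set.ncard_pair]
      intro h
      exact rot_ne_reflAt p hp 0 s (by rw [rot_zero, h])
    · left
      have hSeq : {g ∈ Dgrp p | FixedBy p g σ.1} = {1} := by
        ext g
        simp only [Set.mem_sep_iff, Set.mem_singleton_iff]
        constructor
        · rintro ⟨(⟨r, rfl⟩ | ⟨t, rfl⟩), hfix⟩
          · rw [honly r hfix, rot_zero]
          · exact absurd ⟨t, hfix⟩ hrefl
        · rintro rfl
          exact ⟨h1mem.1, h1mem.2⟩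
      rw [hSeq, Set.ncard_singleton]
end
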